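/- For every θ ∈ (0,∞)^d and every s ∈ ℂ with Re(s) > d, Σ_{v ∈ Z^d_+ \ {0}} 2^{d(v)-1} (θ·v)^{-s} = Σ_{j=1}^{d} Σ_{1 ≤ i_1 < ⋯ < i_j ≤ d} 2^{j-1} ζ_j(s, θ_{i_1}+⋯+θ_{i_j}, (θ_{i_1},...,θ_{i_j})). In particular, Σ_{v ∈ Z^d_+ ∩ (0,∞)^d} 2^{d(v)-1}(θ·v)^{-s} = 2^{d-1} ζ_d(s, θ_1+⋯+θ_d, θ). -/

import Mathlib

/-!
Group the nonzero vectors `v` by their support `T`. A vector with support `T` is `v_i = 1 + u_i`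
on `T` (and `0` off `T`) with `u ∈ ℕ^T` arbitrary, so `d(v) = |T|` and
`θ·v = Σ_{i∈T} θ_i + θ|_T·u`: the sum over that fiber is `2^{|T|-1} ζ_{|T|}(s, Σ_{i∈T} θ_i, θ|_T)`.
Absolute convergence for `Re s > |T|` follows from `w + θ·u ≥ m (1 + Σ u_i)` with
`m = min(w, θ_i) > 0` and `∏ (1 + u_i) ≤ (1 + Σ u_i)^{|T|}`, which compares the series with a
product of convergent `p`-series.
-/

open Complex Finset

noncomputable section

/-- Number of nonzero coordinates of a vector `v ∈ ℤ^d_+`. -/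
def nnz {d : ℕ} (v : Fin d → ℕ) : ℕ := (Finset.univ.filter fun i => v i ≠ 0).card

/-- Standard scalar product `θ · v`. -/
def dotR {d : ℕ} (θ : Fin d → ℝ) (v : Fin d → ℕ) : ℝ := ∑ i, θ i * (v i : ℝ)

/-- The Barnes zeta function in `δ` dimensions,
`ζ_δ(s, w, θ) = Σ_{v ∈ ℤ_{≥0}^δ} (w + θ·v)^{-s}`. -/
def barnesZeta (δ : ℕ) (s w : ℂ) (θ : Fin δ → ℂ) : ℂ :=
  ∑' v : Fin δ → ℕ, (w + ∑ i, θ i * (v i : ℂ)) ^ (-s)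

lemma summable_prod_nat_add_one_rpow_neg (δ : ℕ) {r : ℝ} (hr : 1 < r) :
    Summable (fun v : Fin δ → ℕ => ∏ i, ((v i : ℝ) + 1) ^ (-r)) := by
  induction δ with
  | zero => exact Summable.of_finite
  | succ n ih =>
    have h1 : Summable (fun m : ℕ => ((m : ℝ) + 1) ^ (-r)) := by
      simpa using (summable_nat_add_iff 1).mpr (Real.summable_nat_rpow.mpr (by linarith))
    have h2 := h1.mul_of_nonneg ih (fun m => by positivity) (fun v => by positivity)
    refine ((Fin.consEquiv fun _ => ℕ).symm.summable_iff.mpr h2).congr fun v => ?_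
    simp [Fin.consEquiv, Fin.prod_univ_succ, Fin.tail]

lemma summable_one_add_sum_rpow_neg {δ : ℕ} {r : ℝ} (hr : δ < r) :
    Summable (fun v : Fin δ → ℕ => (1 + ∑ i, (v i : ℝ)) ^ (-r)) := by
  rcases Nat.eq_zero_or_pos δ with rfl | hδ
  · exact Summable.of_finite
  have hδ' : (0 : ℝ) < δ := by exact_mod_cast hδ
  refine (summable_prod_nat_add_one_rpow_neg δ ((one_lt_div hδ').mpr hr)).of_nonneg_of_le
    (fun v => by positivity) fun v => ?_
  have hprod : ∏ i, ((v i : ℝ) + 1) ≤ (1 + ∑ i, (v i : ℝ)) ^ δ := by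
    calc ∏ i, ((v i : ℝ) + 1) ≤ ∏ _i : Fin δ, (1 + ∑ j, (v j : ℝ)) :=
          prod_le_prod (fun i _ => by positivity) fun i _ => by
            linarith [single_le_sum (f := fun j => (v j : ℝ)) (fun j _ => by positivity)
              (mem_univ i)]
      _ = (1 + ∑ i, (v i : ℝ)) ^ δ := by simp
  calc (1 + ∑ i, (v i : ℝ)) ^ (-r) = ((1 + ∑ i, (v i : ℝ)) ^ δ) ^ (-(r / δ)) := by
        rw [← Real.rpow_natCast, ← Real.rpow_mul (by positivity)]
        field_simp
    _ ≤ (∏ i, ((v i : ℝ) + 1)) ^ (-(r / δ)) :=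
        Real.rpow_le_rpow_of_nonpos (by positivity) hprod
          (neg_nonpos.mpr (div_nonneg (by linarith) hδ'.le))
    _ = ∏ i, ((v i : ℝ) + 1) ^ (-(r / δ)) :=
        (Real.finsetProd_rpow _ _ (fun i _ => by positivity) _).symm

lemma exists_pos_le_and_forall_le {ι : Type*} [Finite ι] {w : ℝ} (hw : 0 < w) {θ : ι → ℝ}
    (hθ : ∀ i, 0 < θ i) : ∃ m, 0 < m ∧ m ≤ w ∧ ∀ i, m ≤ θ i := by
  obtain ⟨x, hx⟩ := Finite.exists_min (fun o : Option ι => o.elim w θ)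
  refine ⟨x.elim w θ, ?_, hx none, fun i => hx (some i)⟩
  cases x <;> simp [hw, hθ]

lemma hasSum_barnesZeta {δ : ℕ} {w : ℝ} (hw : 0 < w) {θ : Fin δ → ℝ} (hθ : ∀ i, 0 < θ i)
    {s : ℂ} (hs : δ < s.re) :
    HasSum (fun v : Fin δ → ℕ => ((w + dotR θ v : ℝ) : ℂ) ^ (-s))
      (barnesZeta δ s w (fun i => θ i)) := by
  obtain ⟨m, hm, hmw, hmθ⟩ := exists_pos_le_and_forall_le hw hθ
  have hbound : ∀ v : Fin δ → ℕ, ‖((w + dotR θ v : ℝ) : ℂ) ^ (-s)‖ ≤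
      m ^ (-s.re) * (1 + ∑ i, (v i : ℝ)) ^ (-s.re) := fun v => by
    have hlow : m * (1 + ∑ i, (v i : ℝ)) ≤ w + dotR θ v := by
      rw [mul_add, mul_one, mul_sum, dotR]
      gcongr with i
      exact hmθ i
    rw [norm_cpow_eq_rpow_re_of_pos (lt_of_lt_of_le (by positivity) hlow), neg_re,
      ← Real.mul_rpow hm.le (by positivity)]
    exact Real.rpow_le_rpow_of_nonpos (by positivity) hlow (by linarith)
  have hsum := ((summable_one_add_sum_rpow_neg hs).mul_left _).of_norm_bounded hbound
  simpa [barnesZeta, dotR] using hsum.hasSum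

def posPiEquiv (ι : Type*) : (ι → ℕ) ≃ {v : ι → ℕ // ∀ i, 0 < v i} :=
  (Equiv.piCongrRight fun _ => Equiv.pnatEquivNat.symm).trans Equiv.subtypePiEquivPi.symm

@[simp]
lemma posPiEquiv_apply_coe {ι : Type*} (u : ι → ℕ) (i : ι) : (posPiEquiv ι u).1 i = u i + 1 :=
  rfl

lemma hasSum_dotR_cpow_neg_pos {δ : ℕ} (hδ : 0 < δ) {θ : Fin δ → ℝ} (hθ : ∀ i, 0 < θ i) {s : ℂ}
    (hs : δ < s.re) :
    HasSum (fun v : {v : Fin δ → ℕ // ∀ i, 0 < v i} => (dotR θ v.1 : ℂ) ^ (-s))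
      (barnesZeta δ s (∑ i, θ i : ℝ) (fun i => θ i)) := by
  have hw : 0 < ∑ i, θ i := sum_pos (fun i _ => hθ i) (univ_nonempty_iff.mpr ⟨⟨0, hδ⟩⟩)
  rw [← (posPiEquiv _).hasSum_iff]
  convert hasSum_barnesZeta hw hθ hs using 1
  ext u
  simp [dotR, mul_add, sum_add_distrib, add_comm]

lemma filter_ne_zero_eq_iff {ι : Type*} [Fintype ι] {v : ι → ℕ} {T : Finset ι} :
    univ.filter (fun i => v i ≠ 0) = T ↔ ∀ i, 0 < v i ↔ i ∈ T := by
  simp [Finset.ext_iff, pos_iff_ne_zero]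

def supportRestrictEquiv {ι κ : Type*} [Fintype ι] [DecidableEq ι] (T : Finset ι) (e : κ ≃ T) :
    {v : ι → ℕ // univ.filter (fun i => v i ≠ 0) = T} ≃ {w : κ → ℕ // ∀ k, 0 < w k} where
  toFun v := ⟨fun k => v.1 (e k), fun k => (filter_ne_zero_eq_iff.mp v.2 _).mpr (e k).2⟩
  invFun w := ⟨fun i => if h : i ∈ T then w.1 (e.symm ⟨i, h⟩) else 0,
    filter_ne_zero_eq_iff.mpr fun i => by by_cases h : i ∈ T <;> simp [h, w.2]⟩
  left_inv v := by
    ext i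
    by_cases h : i ∈ T
    · simp [h]
    · simpa [h, eq_comm] using mt (filter_ne_zero_eq_iff.mp v.2 i).mp h
  right_inv w := by ext k; simp

lemma dotR_eq_sum_supportRestrictEquiv {d : ℕ} {κ : Type*} [Fintype κ] (θ : Fin d → ℝ)
    (T : Finset (Fin d)) (e : κ ≃ T) (v : {v : Fin d → ℕ // univ.filter (fun i => v i ≠ 0) = T}) :
    dotR θ v.1 = ∑ k, θ (e k) * (supportRestrictEquiv T e v).1 k := by
  have hzero : ∀ i ∉ T, v.1 i = 0 := fun i hi => by
    simpa using mt (filter_ne_zero_eq_iff.mp v.2 i).mp hi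
  rw [dotR, ← sum_subset (subset_univ T) fun i _ hi => by simp [hzero i hi], ← sum_coe_sort T,
    ← e.sum_comp]
  rfl

lemma nnz_eq_card {d : ℕ} {T : Finset (Fin d)}
    (v : {v : Fin d → ℕ // univ.filter (fun i => v i ≠ 0) = T}) : nnz v.1 = T.card :=
  congrArg card v.2

lemma hasSum_filter_ne_zero_eq {d : ℕ} {θ : Fin d → ℝ} (hθ : ∀ i, 0 < θ i) {s : ℂ} (hs : d < s.re)
    {T : Finset (Fin d)} (hT : T.Nonempty) :
    HasSum (fun v : {v : Fin d → ℕ // univ.filter (fun i => v i ≠ 0) = T} =>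
        (2 : ℂ) ^ (nnz v.1 - 1) * (dotR θ v.1 : ℂ) ^ (-s))
      ((2 : ℂ) ^ (T.card - 1) * barnesZeta T.card s (∑ i ∈ T, (θ i : ℂ))
        (fun i => ((θ (T.orderIsoOfFin rfl i).1 : ℝ) : ℂ))) := by
  set e := (T.orderIsoOfFin rfl).toEquiv
  have hcard : (T.card : ℝ) < s.re := lt_of_le_of_lt (by simpa using card_le_univ T) hs
  have hw : ∑ i ∈ T, (θ i : ℂ) = ((∑ k, θ (e k) : ℝ) : ℂ) := by
    rw [e.sum_comp (fun i => θ i), sum_coe_sort T θ, ofReal_sum]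
  rw [hw, ← (supportRestrictEquiv T e).symm.hasSum_iff]
  simp only [Function.comp_def, nnz_eq_card, dotR_eq_sum_supportRestrictEquiv θ T e,
    Equiv.apply_symm_apply]
  exact (hasSum_dotR_cpow_neg_pos hT.card_pos (fun k => hθ (e k)) hcard).mul_left _

lemma nnz_eq_of_forall_pos {d : ℕ} {v : Fin d → ℕ} (hv : ∀ i, 0 < v i) : nnz v = d := by
  simp [nnz, fun i => (hv i).ne']

lemma biUnion_filter_ne_zero_eq {ι : Type*} [Fintype ι] [DecidableEq ι] :
    ⋃ T ∈ univ.powerset.filter Finset.Nonempty, {v : ι → ℕ | univ.filter (fun i => v i ≠ 0) = T} =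
      {v | v ≠ 0} := by
  ext v
  simp [Finset.nonempty_iff_ne_empty, filter_eq_empty_iff, funext_iff]

theorem stmt5 (d : ℕ) (hd : 1 ≤ d) (θ : Fin d → ℝ) (hθ : ∀ i, 0 < θ i)
    (s : ℂ) (hs : (d : ℝ) < s.re) :
    ((∑' v : {v : Fin d → ℕ // v ≠ 0}, (2 : ℂ) ^ (nnz v.1 - 1) * (dotR θ v.1 : ℂ) ^ (-s)) =
      ∑ T ∈ Finset.univ.powerset.filter Finset.Nonempty,
        (2 : ℂ) ^ (T.card - 1) *
          barnesZeta T.card s (∑ i ∈ T, (θ i : ℂ))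
            (fun i => ((θ (T.orderIsoOfFin rfl i).1 : ℝ) : ℂ))) ∧
    (∑' v : {v : Fin d → ℕ // ∀ i, 0 < v i},
        (2 : ℂ) ^ (nnz v.1 - 1) * (dotR θ v.1 : ℂ) ^ (-s)) =
      2 ^ (d - 1) * barnesZeta d s (∑ i, (θ i : ℂ)) (fun i => (θ i : ℂ)) := by
  constructor
  · have hfibers := hasSum_sum_disjoint
      (f := fun v : Fin d → ℕ => (2 : ℂ) ^ (nnz v - 1) * (dotR θ v : ℂ) ^ (-s))
      (univ.powerset.filter Finset.Nonempty)
      (t := fun T => {v : Fin d → ℕ | univ.filter (fun i => v i ≠ 0) = T})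
      (fun T _ T' _ hne => Set.disjoint_left.mpr fun v h h' => hne (h.symm.trans h'))
      (fun T hT => hasSum_filter_ne_zero_eq hθ hs (mem_filter.mp hT).2)
    rw [biUnion_filter_ne_zero_eq] at hfibers
    exact hfibers.tsum_eq
  · rw [← ofReal_sum, ← ((hasSum_dotR_cpow_neg_pos hd hθ hs).mul_left _).tsum_eq]
    exact tsum_congr fun v => by rw [nnz_eq_of_forall_pos v.2]
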